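/- arXiv:2203.15168 — 3 statements merged into one kernel-verified Lean document; each statement's English description precedes it below -/
import Mathlib

section
/- For every nonnegative integer M ≥ 1 and |q| < 1, the sums S_M = ∑_{n≥0} (q^{2M};q)_n (q^{2-2M};q^2)_n / ((q^{4M+1};q^2)_n (q^3;q^3)_n) · (-1)^n q^{binom(n,2)+n+2Mn} satisfy the recurrence S_M / S_{M-1} = (1 - q^{4M-3})(1 - q^{4M-1}) / ((1 - q^{2M-1})(1 - q^{6M-3})). -/
/-!
For `M ≥ 1` the factor `(q^{2-2M}; q^2)_n` vanishes for `n ≥ M`, so `S q M` is a finite sum of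
terms `t_M(n)`. Both `t_m(n+1) / t_m(n)` and the factor `ρ` in `t_m(n) = ρ t_{m+1}(n)` are rational
functions of `q`, `q^{2m}` and `q^n`, which makes creative telescoping possible: for the certificate
`G(n) = R(n) t_{m+1}(n)`, with `R` rational as well, `t_{m+1}(n) - c_m t_m(n) = G(n+1) - G(n)`,
where `c_m` is the claimed value of `S_{m+1} / S_m`. Summed over `n` the right side telescopes to
`0`, because `R(0) = 0` and `t_{m+1}` vanishes past the support. For `m = 0` or `q = 0` both sums
are `1`.
-/

open Finset

noncomputable def qPoch (a q : ℂ) (n : ℕ) : ℂ := ∏ k ∈ Finset.range n, (1 - a * q ^ k)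

noncomputable def qPochInf (a q : ℂ) : ℂ := ∏' k : ℕ, (1 - a * q ^ k)

noncomputable def S (q : ℂ) (M : ℕ) : ℂ :=
  ∑' n : ℕ, (qPoch (q ^ (2 * M)) q n * qPoch (q ^ 2 * (q ^ (2 * M))⁻¹) (q ^ 2) n
    / (qPoch (q ^ (4 * M + 1)) (q ^ 2) n * qPoch (q ^ 3) (q ^ 3) n)
    * (-1 : ℂ) ^ n * q ^ (n.choose 2 + n + 2 * M * n))

lemma qPoch_succ (a q : ℂ) (n : ℕ) : qPoch a q (n + 1) = qPoch a q n * (1 - a * q ^ n) :=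
  prod_range_succ _ n

lemma qPoch_eq_zero {a q : ℂ} {j n : ℕ} (hj : j < n) (h : a * q ^ j = 1) : qPoch a q n = 0 :=
  prod_eq_zero (mem_range.mpr hj) (sub_eq_zero.mpr h.symm)

section RationalFunctions

-- `y` stands for `q ^ (2 * m)` and `x` for `q ^ n`.

variable {K : Type*} [Field K]

def termRatio (q y x : K) : K :=
  -(q * y * x) * (1 - y * x) * (1 - q ^ 2 * x ^ 2 / y)
    / ((1 - q * y ^ 2 * x ^ 2) * (1 - q ^ 3 * x ^ 3))

def levelRatio (q y x : K) : K :=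
  -(1 - q * y) * (y - x ^ 2) * (1 - q * y ^ 2 * x ^ 2) * (1 - q ^ 3 * y ^ 2 * x ^ 2)
    / ((1 - y * x) * (1 - q * y * x) * (1 - q * y ^ 2) * (1 - q ^ 3 * y ^ 2) * x ^ 2)

def recurrenceFactor (q y : K) : K :=
  (1 - q * y ^ 2) * (1 - q ^ 3 * y ^ 2) / ((1 - q * y) * (1 - q ^ 3 * y ^ 3))

def certificateRatio (q y x : K) : K :=
  -y * (1 - x ^ 3) * (1 - q ^ 3 * y ^ 2 * x ^ 2) / ((1 - y * x) * (1 - q ^ 3 * y ^ 3) * x ^ 2)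

variable {q : K} (hroot : ∀ n : ℕ, 1 ≤ n → q ^ n ≠ 1)
include hroot

lemma one_sub_ne_zero_of_eq_pow (k : ℕ) (hk : 1 ≤ k) {z : K} (hz : z = q ^ k) : 1 - z ≠ 0 :=
  sub_ne_zero.mpr fun h => hroot k hk (hz ▸ h.symm)

lemma recurrenceFactor_ne_zero (m : ℕ) : recurrenceFactor q (q ^ (2 * m)) ≠ 0 := by
  have hne := one_sub_ne_zero_of_eq_pow hroot
  exact div_ne_zero
    (mul_ne_zero (hne (4 * m + 1) (by omega) (by ring)) (hne (4 * m + 3) (by omega) (by ring)))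
    (mul_ne_zero (hne (2 * m + 1) (by omega) (by ring)) (hne (6 * m + 3) (by omega) (by ring)))

lemma recurrenceFactor_one : recurrenceFactor q 1 = 1 := by
  have h1 : 1 - q ≠ 0 := one_sub_ne_zero_of_eq_pow hroot 1 le_rfl (pow_one q).symm
  have h3 : 1 - q ^ 3 ≠ 0 := one_sub_ne_zero_of_eq_pow hroot 3 (by norm_num) rfl
  simp only [recurrenceFactor, one_pow, mul_one]
  exact div_self (mul_ne_zero h1 h3)

lemma levelRatio_pow_zero {m : ℕ} (hm : 1 ≤ m) : levelRatio q (q ^ (2 * m)) (q ^ 0) = 1 := by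
  have hne := one_sub_ne_zero_of_eq_pow hroot
  generalize hy : q ^ (2 * m) = y
  have h1 : 1 - y ≠ 0 := hne (2 * m) (by omega) hy.symm
  have h2 : 1 - q * y ≠ 0 := hne (2 * m + 1) (by omega) (by rw [← hy]; ring)
  have h3 : 1 - q * y ^ 2 ≠ 0 := hne (4 * m + 1) (by omega) (by rw [← hy]; ring)
  have h4 : 1 - q ^ 3 * y ^ 2 ≠ 0 := hne (4 * m + 3) (by omega) (by rw [← hy]; ring)
  rw [pow_zero, levelRatio]
  field_simp
  ring

variable (hq0 : q ≠ 0)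
include hq0

lemma termRatio_mul_levelRatio {m : ℕ} (hm : 1 ≤ m) (n : ℕ) :
    termRatio q (q ^ (2 * m)) (q ^ n) * levelRatio q (q ^ (2 * m)) (q ^ n)
      = levelRatio q (q ^ (2 * m)) (q ^ (n + 1)) * termRatio q (q ^ (2 * (m + 1))) (q ^ n) := by
  have hne := one_sub_ne_zero_of_eq_pow hroot
  rw [pow_succ, show q ^ (2 * (m + 1)) = q ^ 2 * q ^ (2 * m) by ring]
  generalize hy : q ^ (2 * m) = y
  generalize hx : q ^ n = x
  have hy0 : y ≠ 0 := hy ▸ pow_ne_zero _ hq0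
  have h1 : 1 - y * x ≠ 0 := hne (2 * m + n) (by omega) (by rw [← hy, ← hx]; ring)
  have h2 : 1 - q ^ 2 * y * x ≠ 0 := hne (2 * m + n + 2) (by omega) (by rw [← hy, ← hx]; ring)
  have h3 : 1 - q * y ^ 2 * x ^ 2 ≠ 0 :=
    hne (4 * m + 2 * n + 1) (by omega) (by rw [← hy, ← hx]; ring)
  have h4 : 1 - q ^ 5 * y ^ 2 * x ^ 2 ≠ 0 :=
    hne (4 * m + 2 * n + 5) (by omega) (by rw [← hy, ← hx]; ring)
  unfold termRatio levelRatio
  field_simp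

lemma one_sub_recurrenceFactor_mul_levelRatio {m : ℕ} (hm : 1 ≤ m) (n : ℕ) :
    1 - recurrenceFactor q (q ^ (2 * m)) * levelRatio q (q ^ (2 * m)) (q ^ n)
      = certificateRatio q (q ^ (2 * m)) (q ^ (n + 1)) * termRatio q (q ^ (2 * (m + 1))) (q ^ n)
        - certificateRatio q (q ^ (2 * m)) (q ^ n) := by
  have hne := one_sub_ne_zero_of_eq_pow hroot
  rw [pow_succ, show q ^ (2 * (m + 1)) = q ^ 2 * q ^ (2 * m) by ring]
  generalize hy : q ^ (2 * m) = y
  generalize hx : q ^ n = x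
  have hy0 : y ≠ 0 := hy ▸ pow_ne_zero _ hq0
  have hx0 : x ≠ 0 := hx ▸ pow_ne_zero _ hq0
  have h1 : 1 - y * x ≠ 0 := hne (2 * m + n) (by omega) (by rw [← hy, ← hx]; ring)
  have h2 : 1 - q * y * x ≠ 0 := hne (2 * m + n + 1) (by omega) (by rw [← hy, ← hx]; ring)
  have h3 : 1 - q * y ^ 2 ≠ 0 := hne (4 * m + 1) (by omega) (by rw [← hy]; ring)
  have h4 : 1 - q ^ 3 * y ^ 2 ≠ 0 := hne (4 * m + 3) (by omega) (by rw [← hy]; ring)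
  have h5 : 1 - q ^ 5 * y ^ 2 * x ^ 2 ≠ 0 :=
    hne (4 * m + 2 * n + 5) (by omega) (by rw [← hy, ← hx]; ring)
  have h6 : 1 - q ^ 3 * x ^ 3 ≠ 0 := hne (3 * n + 3) (by omega) (by rw [← hx]; ring)
  have h7 : 1 - q * y ≠ 0 := hne (2 * m + 1) (by omega) (by rw [← hy]; ring)
  have h8 : 1 - q ^ 3 * y ^ 3 ≠ 0 := hne (6 * m + 3) (by omega) (by rw [← hy]; ring)
  unfold termRatio levelRatio recurrenceFactor certificateRatio
  field_simp
  ring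

end RationalFunctions

noncomputable def sTerm (q : ℂ) (M n : ℕ) : ℂ :=
  qPoch (q ^ (2 * M)) q n * qPoch (q ^ 2 * (q ^ (2 * M))⁻¹) (q ^ 2) n
    / (qPoch (q ^ (4 * M + 1)) (q ^ 2) n * qPoch (q ^ 3) (q ^ 3) n)
    * (-1 : ℂ) ^ n * q ^ (n.choose 2 + n + 2 * M * n)

lemma S_eq_tsum_sTerm (q : ℂ) (M : ℕ) : S q M = ∑' n, sTerm q M n := rfl

lemma sTerm_zero (q : ℂ) (M : ℕ) : sTerm q M 0 = 1 := by simp [sTerm, qPoch]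

lemma sTerm_succ (q : ℂ) (M n : ℕ) :
    sTerm q M (n + 1) = termRatio q (q ^ (2 * M)) (q ^ n) * sTerm q M n := by
  have hchoose : (n + 1).choose 2 = n.choose 2 + n := by
    rw [Nat.choose_succ_succ', Nat.choose_one_right, add_comm]
  simp only [sTerm, termRatio, qPoch_succ, hchoose, div_eq_mul_inv, mul_inv]
  ring

lemma sTerm_eq_zero_of_le {q : ℂ} (hq0 : q ≠ 0) {M n : ℕ} (hM : 1 ≤ M) (hn : M ≤ n) :
    sTerm q M n = 0 := by
  have hB : qPoch (q ^ 2 * (q ^ (2 * M))⁻¹) (q ^ 2) n = 0 := by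
    refine qPoch_eq_zero (j := M - 1) (by omega) ?_
    rw [mul_right_comm, ← pow_succ', Nat.sub_add_cancel hM, ← pow_mul]
    exact mul_inv_cancel₀ (pow_ne_zero _ hq0)
  simp [sTerm, hB]

lemma S_eq_sum_range {q : ℂ} (hq0 : q ≠ 0) {M N : ℕ} (hM : 1 ≤ M) (hN : M ≤ N) :
    S q M = ∑ n ∈ range N, sTerm q M n :=
  tsum_eq_sum fun n hn => sTerm_eq_zero_of_le hq0 hM (by simp at hn; omega)

lemma S_eq_one_of_sTerm_eq_zero {q : ℂ} {M : ℕ} (h : ∀ n, n ≠ 0 → sTerm q M n = 0) :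
    S q M = 1 := by
  rw [S_eq_tsum_sTerm, tsum_eq_single 0 h, sTerm_zero]

lemma S_zero_right (q : ℂ) : S q 0 = 1 :=
  S_eq_one_of_sTerm_eq_zero fun n hn => by
    rw [sTerm, qPoch_eq_zero (j := 0) (Nat.pos_of_ne_zero hn) (by simp)]
    simp

lemma S_one {q : ℂ} (hq0 : q ≠ 0) : S q 1 = 1 :=
  S_eq_one_of_sTerm_eq_zero fun _ hn => sTerm_eq_zero_of_le hq0 le_rfl (Nat.pos_of_ne_zero hn)

lemma S_zero_left (M : ℕ) : S 0 M = 1 :=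
  S_eq_one_of_sTerm_eq_zero fun n hn => by
    simp [sTerm, zero_pow (by omega : n.choose 2 + n + 2 * M * n ≠ 0)]

noncomputable def certificateTerm (q : ℂ) (m k : ℕ) : ℂ :=
  certificateRatio q (q ^ (2 * m)) (q ^ k) * sTerm q (m + 1) k

section Recurrence

variable {q : ℂ} (hroot : ∀ n : ℕ, 1 ≤ n → q ^ n ≠ 1)
include hroot

lemma sTerm_eq_levelRatio_mul (hq0 : q ≠ 0) {m : ℕ} (hm : 1 ≤ m) (n : ℕ) :
    sTerm q m n = levelRatio q (q ^ (2 * m)) (q ^ n) * sTerm q (m + 1) n := by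
  induction n with
  | zero => rw [sTerm_zero, sTerm_zero, levelRatio_pow_zero hroot hm, mul_one]
  | succ n ih =>
    rw [sTerm_succ, sTerm_succ, ih, ← mul_assoc, termRatio_mul_levelRatio hroot hq0 hm, mul_assoc]

lemma sTerm_sub_recurrenceFactor_mul (hq0 : q ≠ 0) {m : ℕ} (hm : 1 ≤ m) (n : ℕ) :
    sTerm q (m + 1) n - recurrenceFactor q (q ^ (2 * m)) * sTerm q m n
      = certificateTerm q m (n + 1) - certificateTerm q m n := by
  rw [sTerm_eq_levelRatio_mul hroot hq0 hm, certificateTerm, certificateTerm, sTerm_succ]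
  linear_combination sTerm q (m + 1) n * one_sub_recurrenceFactor_mul_levelRatio hroot hq0 hm n

lemma S_succ_of_pos (hq0 : q ≠ 0) {m : ℕ} (hm : 1 ≤ m) :
    S q (m + 1) = recurrenceFactor q (q ^ (2 * m)) * S q m := by
  have hG0 : certificateTerm q m 0 = 0 := by simp [certificateTerm, certificateRatio]
  have hGtop : certificateTerm q m (m + 1) = 0 := by
    simp [certificateTerm, sTerm_eq_zero_of_le hq0 (M := m + 1) (by omega) le_rfl]
  rw [S_eq_sum_range hq0 (by omega) le_rfl, S_eq_sum_range hq0 hm (Nat.le_succ m), mul_sum,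
    ← sub_eq_zero, ← sum_sub_distrib,
    sum_congr rfl fun n _ => sTerm_sub_recurrenceFactor_mul hroot hq0 hm n,
    sum_range_sub (certificateTerm q m), hG0, hGtop, sub_zero]

lemma S_succ (m : ℕ) : S q (m + 1) = recurrenceFactor q (q ^ (2 * m)) * S q m := by
  rcases eq_or_ne q 0 with rfl | hq0
  · simp [S_zero_left, recurrenceFactor]
  rcases Nat.eq_zero_or_pos m with rfl | hm
  · rw [S_one hq0, S_zero_right, mul_zero, pow_zero, recurrenceFactor_one hroot, mul_one]
  exact S_succ_of_pos hroot hq0 hm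

lemma S_ne_zero (M : ℕ) : S q M ≠ 0 := by
  induction M with
  | zero => simp [S_zero_right]
  | succ m ih => rw [S_succ hroot]; exact mul_ne_zero (recurrenceFactor_ne_zero hroot m) ih

end Recurrence

theorem stmt5_general (q : ℂ)
    (hroot : ∀ n : ℕ, 1 ≤ n → q ^ n ≠ 1) (M : ℕ) (hM : 1 ≤ M) :
    S q M / S q (M - 1)
    = (1 - q ^ (4 * M - 3)) * (1 - q ^ (4 * M - 1))
      / ((1 - q ^ (2 * M - 1)) * (1 - q ^ (6 * M - 3))) := by
  obtain ⟨m, rfl⟩ : ∃ m, M = m + 1 := ⟨M - 1, by omega⟩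
  rw [Nat.add_sub_cancel, S_succ hroot, mul_div_cancel_right₀ _ (S_ne_zero hroot m),
    show 4 * (m + 1) - 3 = 4 * m + 1 by omega, show 4 * (m + 1) - 1 = 4 * m + 3 by omega,
    show 2 * (m + 1) - 1 = 2 * m + 1 by omega, show 6 * (m + 1) - 3 = 6 * m + 3 by omega,
    recurrenceFactor]
  ring

theorem stmt5 (q : ℂ) (hq : ‖q‖ < 1)
    (hroot : ∀ n : ℕ, 1 ≤ n → q ^ n ≠ 1) (M : ℕ) (hM : 1 ≤ M) :
    S q M / S q (M - 1)
    = (1 - q ^ (4 * M - 3)) * (1 - q ^ (4 * M - 1))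
      / ((1 - q ^ (2 * M - 1)) * (1 - q ^ (6 * M - 3))) :=
  stmt5_general q hroot M hM
end

section
/- One has (3/4)^{1/3} = Γ(5/18)Γ(11/18)Γ(17/18)Γ(1/2) / (Γ(2/9)Γ(5/9)Γ(8/9)Γ(2/3)). -/
/-!
By the Bohr–Mollerup theorem `Γ` satisfies Gauss's multiplication formula
`∏_{j<k} Γ((s + j)/k) = Γ(s) k^(1-s) ∏_{j<k} Γ((1 + j)/k)`: divided by the right-hand side
without `Γ(s)`, the left-hand side is log-convex in `s`, satisfies `f (s + 1) = s f s` and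
equals `1` at `s = 1`. For `k = 3` at `s = 5/6` and `s = 2/3` the unevaluated constant cancels,
leaving `3^(-1/6) Γ(5/6) Γ(1/2) / Γ(2/3)²`. Legendre's duplication formula at `1/3` and the
reflection formula `Γ(1/3) Γ(2/3) = 2π/√3` turn this into `(3/4)^(1/3)`.
-/

open Finset Real

theorem ConvexOn.sum {𝕜 E β ι : Type*} [Semiring 𝕜] [PartialOrder 𝕜] [AddCommMonoid E]
    [AddCommMonoid β] [PartialOrder β] [IsOrderedAddMonoid β] [SMul 𝕜 E] [Module 𝕜 β]
    {s : Set E} (hs : Convex 𝕜 s) {t : Finset ι} {f : ι → E → β}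
    (hf : ∀ i ∈ t, ConvexOn 𝕜 s (f i)) : ConvexOn 𝕜 s fun x => ∑ i ∈ t, f i x := by
  classical
  induction t using Finset.induction_on with
  | empty => simpa only [sum_empty] using convexOn_const 0 hs
  | insert i t hi ih =>
    simp only [sum_insert hi]
    exact (hf i (mem_insert_self i t)).add (ih fun j hj => hf j (mem_insert_of_mem hj))

namespace Real

theorem convexOn_log_Gamma_add_div {a c : ℝ} (ha : 0 < a) (hc : 0 ≤ c) :
    ConvexOn ℝ (Set.Ioi 0) fun s => log (Gamma ((s + c) / a)) := by
  refine ⟨convex_Ioi 0, fun x hx y hy μ ν hμ hν hμν => ?_⟩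
  have hx' : (x + c) / a ∈ Set.Ioi 0 := div_pos (by linarith [Set.mem_Ioi.mp hx]) ha
  have hy' : (y + c) / a ∈ Set.Ioi 0 := div_pos (by linarith [Set.mem_Ioi.mp hy]) ha
  have key : (μ • x + ν • y + c) / a = μ • ((x + c) / a) + ν • ((y + c) / a) := by
    simp only [smul_eq_mul]
    field_simp
    linear_combination -c * hμν
  dsimp only
  rw [key]
  exact convexOn_log_Gamma.2 hx' hy' hμ hν hμν

noncomputable def multiplicationGamma (k : ℕ) (s : ℝ) : ℝ :=
  k ^ (s - 1) * (∏ j ∈ range k, Gamma ((s + j) / k)) / ∏ j ∈ range k, Gamma ((1 + j) / k)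

variable {k : ℕ}

theorem prod_Gamma_add_div_pos (hk : 0 < k) {s : ℝ} (hs : 0 < s) :
    0 < ∏ j ∈ range k, Gamma ((s + j) / k) :=
  prod_pos fun j _ => Gamma_pos_of_pos (by positivity)

theorem multiplicationGamma_pos (hk : 0 < k) {s : ℝ} (hs : 0 < s) :
    0 < multiplicationGamma k s := by
  have := prod_Gamma_add_div_pos hk hs
  have := prod_Gamma_add_div_pos hk one_pos
  unfold multiplicationGamma
  positivity

theorem multiplicationGamma_one (hk : 0 < k) : multiplicationGamma k 1 = 1 := by
  rw [multiplicationGamma, sub_self, rpow_zero, one_mul,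
    div_self (prod_Gamma_add_div_pos hk one_pos).ne']

theorem multiplicationGamma_add_one (hk : 0 < k) {s : ℝ} (hs : 0 < s) :
    multiplicationGamma k (s + 1) = s * multiplicationGamma k s := by
  have hk' : (0 : ℝ) < k := Nat.cast_pos.mpr hk
  -- `s ↦ s + 1` shifts the arguments `(s + j) / k` by one step, trading `s / k` for `s / k + 1`
  have shift : (∏ j ∈ range k, Gamma ((s + j + 1) / k)) * Gamma (s / k)
      = (∏ j ∈ range k, Gamma ((s + j) / k)) * (s / k * Gamma (s / k)) := by
    have hlast : (s + k) / k = s / k + 1 := by field_simp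
    have h := (prod_range_succ' (fun j : ℕ => Gamma ((s + j) / k)) k).symm.trans
      (prod_range_succ (fun j : ℕ => Gamma ((s + j) / k)) k)
    simpa only [Nat.cast_succ, Nat.cast_zero, add_zero, ← add_assoc, hlast,
      Gamma_add_one (div_pos hs hk').ne'] using h
  have hprod : ∏ j ∈ range k, Gamma ((s + j + 1) / k)
      = (∏ j ∈ range k, Gamma ((s + j) / k)) * (s / k) := by
    rw [← mul_right_cancel_iff_of_pos (Gamma_pos_of_pos (div_pos hs hk')), shift]; ring
  simp_rw [multiplicationGamma, add_sub_cancel_right, add_right_comm s 1]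
  rw [hprod, rpow_sub hk', rpow_one]
  field_simp

theorem log_multiplicationGamma_eq (hk : 0 < k) :
    Set.EqOn (log ∘ multiplicationGamma k)
      (fun s => ∑ j ∈ range k, log (Gamma ((s + j) / k)) + (s - 1) * log k
        - log (∏ j ∈ range k, Gamma ((1 + j) / k))) (Set.Ioi 0) := by
  intro s (hs : 0 < s)
  have hk' : (0 : ℝ) < k := Nat.cast_pos.mpr hk
  rw [Function.comp_apply, multiplicationGamma,
    log_div (mul_pos (rpow_pos_of_pos hk' _) (prod_Gamma_add_div_pos hk hs)).ne'
      (prod_Gamma_add_div_pos hk one_pos).ne',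
    log_mul (rpow_pos_of_pos hk' _).ne' (prod_Gamma_add_div_pos hk hs).ne',
    log_rpow hk', log_prod fun j _ => (Gamma_pos_of_pos (by positivity)).ne']
  ring

theorem convexOn_log_multiplicationGamma (hk : 0 < k) :
    ConvexOn ℝ (Set.Ioi 0) (log ∘ multiplicationGamma k) := by
  have hk' : (0 : ℝ) < k := Nat.cast_pos.mpr hk
  have hsum := ConvexOn.sum (convex_Ioi 0) (t := range k) fun j _ =>
    convexOn_log_Gamma_add_div (c := j) hk' j.cast_nonneg
  have hlin : ConvexOn ℝ (Set.Ioi 0) fun s : ℝ => (s - 1) * log k :=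
    ((((LinearMap.mul ℝ ℝ).flip (log k)).convexOn (convex_Ioi 0)).add_const (-log k)).congr
      fun s _ => by simp only [Pi.add_apply, LinearMap.flip_apply, LinearMap.mul_apply']; ring
  exact ((hsum.add hlin).add_const _).congr (log_multiplicationGamma_eq hk).symm

theorem multiplicationGamma_eq_Gamma (hk : 0 < k) {s : ℝ} (hs : 0 < s) :
    multiplicationGamma k s = Gamma s :=
  eq_Gamma_of_log_convex (convexOn_log_multiplicationGamma hk)
    (multiplicationGamma_add_one hk) (multiplicationGamma_pos hk) (multiplicationGamma_one hk) hs

theorem prod_Gamma_add_div (hk : 0 < k) {s : ℝ} (hs : 0 < s) :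
    ∏ j ∈ range k, Gamma ((s + j) / k)
      = Gamma s * k ^ (1 - s) * ∏ j ∈ range k, Gamma ((1 + j) / k) := by
  have hk' : (0 : ℝ) < k := Nat.cast_pos.mpr hk
  rw [← multiplicationGamma_eq_Gamma hk hs, multiplicationGamma, show 1 - s = -(s - 1) by ring,
    rpow_neg hk'.le]
  field_simp [(prod_Gamma_add_div_pos hk one_pos).ne', (rpow_pos_of_pos hk' (s - 1)).ne']

theorem Gamma_one_third_mul_Gamma_two_thirds : Gamma (1 / 3) * Gamma (2 / 3) = 2 * π / √3 := by
  rw [show (2 / 3 : ℝ) = 1 - 1 / 3 by norm_num, Gamma_mul_Gamma_one_sub,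
    show π * (1 / 3) = π / 3 by ring, sin_pi_div_three]
  field_simp

end Real

theorem three_div_four_rpow_one_third :
    (3 / 4 : ℝ) ^ ((1 : ℝ) / 3)
      = 2 ^ ((1 : ℝ) / 3) * √3 * 3 ^ ((1 : ℝ) / 6) / (2 * 3 ^ ((1 : ℝ) / 3)) := by
  set x : ℝ := 3 ^ ((1 : ℝ) / 6) with hx
  set u : ℝ := 2 ^ ((1 : ℝ) / 3) with hu
  have hx2 : (3 : ℝ) ^ ((1 : ℝ) / 3) = x ^ 2 := by
    rw [hx, ← rpow_natCast, ← rpow_mul zero_le_three]; norm_num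
  have hx3 : √3 = x ^ 3 := by
    rw [hx, sqrt_eq_rpow, ← rpow_natCast, ← rpow_mul zero_le_three]; norm_num
  have hu3 : u ^ 3 = 2 := by
    rw [hu, ← rpow_natCast, ← rpow_mul zero_le_two]; norm_num
  have hx_pos : 0 < x := by positivity
  rw [div_rpow zero_le_three (by norm_num), hx2, hx3, show (4 : ℝ) = 2 ^ 2 by norm_num,
    ← rpow_pow_comm zero_le_two]
  field_simp
  rw [← hu]
  linear_combination -hu3

open Real in
theorem stmt18 :
    (3 / 4 : ℝ) ^ ((1 : ℝ) / 3)
    = Real.Gamma (5 / 18) * Real.Gamma (11 / 18) * Real.Gamma (17 / 18) * Real.Gamma (1 / 2)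
      / (Real.Gamma (2 / 9) * Real.Gamma (5 / 9) * Real.Gamma (8 / 9) * Real.Gamma (2 / 3)) := by
  have h₁ := prod_Gamma_add_div (k := 3) (by norm_num) (show (0 : ℝ) < 5 / 6 by norm_num)
  have h₂ := prod_Gamma_add_div (k := 3) (by norm_num) (show (0 : ℝ) < 2 / 3 by norm_num)
  have hdup := Gamma_mul_Gamma_add_half (1 / 3)
  norm_num [prod_range_succ] at h₁ h₂ hdup
  have hrefl := Gamma_one_third_mul_Gamma_two_thirds
  have ha := Gamma_pos_of_pos (show (0 : ℝ) < 1 / 3 by norm_num)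
  rw [three_div_four_rpow_one_third, h₁, h₂, Gamma_one_half_eq]
  field_simp at hrefl ⊢
  refine mul_left_cancel₀ ha.ne' ?_
  linear_combination Gamma (2 / 3) * 2 ^ ((1 : ℝ) / 3) * hrefl - 2 * √π * hdup
    - 2 * Gamma (2 / 3) * 2 ^ ((1 : ℝ) / 3) * sq_sqrt pi_pos.le
end

section
/- One has (3/4)^{1/3} = ∏_{n≥0} (n + 2/9)(n + 5/9)(n + 8/9)(n + 2/3) / ((n + 5/18)(n + 11/18)(n + 17/18)(n + 1/2)). -/
/-!
Since `∏_{j ≤ N} (j + c) = N ^ c * N! / GammaSeq c N`, the partial products of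
`∏ₙ ∏ᵢ (n + aᵢ) / (n + bᵢ)` equal `∏ᵢ GammaSeq bᵢ N / ∏ᵢ GammaSeq aᵢ N` as soon as
`∑ aᵢ = ∑ bᵢ` (the powers of `N` cancel), so Euler's limit formula gives the value
`∏ Γ(bᵢ) / ∏ Γ(aᵢ)`; the same condition makes the logarithms of the factors `O(1/n²)`,
so the product converges unconditionally.

For `a = (2/9, 5/9, 8/9, 2/3)` and `b = (5/18, 11/18, 17/18, 1/2)`, Gauss's triplication
formula (proved, like Legendre's duplication formula in Mathlib, by the Bohr–Mollerup
theorem, the normalisation at `1` being the reflection formula at `1/3`) reduces the Gamma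
quotient to `3 ^ (-1/6) √π Γ(5/6) / Γ(2/3)²`, and duplication and reflection at `1/3`
evaluate this to `(3/4) ^ (1/3)`.
-/

open Real Filter Finset Set Topology
open scoped Nat

namespace Real

lemma abs_log_one_add_sub_self_le {x : ℝ} (hx : 0 ≤ x) : |log (1 + x) - x| ≤ x ^ 2 := by
  have hupper : log (1 + x) ≤ x := by linarith [log_le_sub_one_of_pos (by linarith : 0 < 1 + x)]
  have hlower : 2 * x / (x + 2) ≤ log (1 + x) := le_log_one_add_of_nonneg hx
  have hgap : x - 2 * x / (x + 2) ≤ x ^ 2 := by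
    rw [sub_le_iff_le_add, ← sub_le_iff_le_add', le_div_iff₀ (by linarith)]
    nlinarith
  rw [abs_sub_comm, abs_of_nonneg (by linarith)]
  linarith

lemma summable_log_one_add_div_sub_div {c : ℝ} (hc : 0 ≤ c) :
    Summable fun n : ℕ => log (1 + c / n) - c / n := by
  refine ((summable_one_div_nat_pow.mpr one_lt_two).mul_left (c ^ 2)).of_norm_bounded fun n => ?_
  calc ‖log (1 + c / n) - c / n‖ ≤ (c / n) ^ 2 := abs_log_one_add_sub_self_le (by positivity)
    _ = c ^ 2 * (1 / (n : ℝ) ^ 2) := by ring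

lemma GammaSeq_pos {c : ℝ} (hc : 0 < c) {N : ℕ} (hN : N ≠ 0) : 0 < GammaSeq c N := by
  have : 0 < ∏ j ∈ range (N + 1), (c + j) := prod_pos fun j _ => by positivity
  unfold GammaSeq
  positivity

section RatioOfShiftedProducts

variable {ι : Type*} (s : Finset ι) {a b : ι → ℝ}

lemma log_prod_add_div_prod_add (ha : ∀ i ∈ s, 0 ≤ a i) (hb : ∀ i ∈ s, 0 ≤ b i)
    (hab : ∑ i ∈ s, a i = ∑ i ∈ s, b i) {n : ℕ} (hn : n ≠ 0) :
    log ((∏ i ∈ s, (n + a i)) / ∏ i ∈ s, (n + b i)) =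
      ∑ i ∈ s, (log (1 + a i / n) - a i / n) - ∑ i ∈ s, (log (1 + b i / n) - b i / n) := by
  have hn' : (0 : ℝ) < n := by positivity
  have hlog : ∀ c : ℝ, 0 ≤ c → log (n + c) = log n + log (1 + c / n) := fun c hc => by
    rw [← log_mul hn'.ne' (by positivity), mul_add, mul_div_cancel₀ _ hn'.ne', mul_one]
  rw [log_div (prod_ne_zero_iff.mpr fun i hi => by have := ha i hi; positivity)
      (prod_ne_zero_iff.mpr fun i hi => by have := hb i hi; positivity),
    log_prod fun i hi => by have := ha i hi; positivity,
    log_prod fun i hi => by have := hb i hi; positivity,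
    sum_congr rfl fun i hi => hlog (a i) (ha i hi), sum_congr rfl fun i hi => hlog (b i) (hb i hi)]
  simp only [sum_sub_distrib, sum_add_distrib, ← sum_div, hab]
  ring

lemma multipliable_prod_add_div_prod_add (ha : ∀ i ∈ s, 0 < a i) (hb : ∀ i ∈ s, 0 < b i)
    (hab : ∑ i ∈ s, a i = ∑ i ∈ s, b i) :
    Multipliable fun n : ℕ => (∏ i ∈ s, (n + a i)) / ∏ i ∈ s, (n + b i) := by
  refine multipliable_of_summable_log (fun n => div_pos (prod_pos fun i hi => ?_)
    (prod_pos fun i hi => ?_)) ?_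
  · have := ha i hi; positivity
  · have := hb i hi; positivity
  have hsum := (summable_sum fun i hi => summable_log_one_add_div_sub_div (ha i hi).le).sub
    (summable_sum fun i hi => summable_log_one_add_div_sub_div (hb i hi).le)
  refine hsum.congr_cofinite ?_
  rw [Nat.cofinite_eq_atTop]
  filter_upwards [eventually_ne_atTop 0] with n hn
  exact (log_prod_add_div_prod_add s (fun i hi => (ha i hi).le) (fun i hi => (hb i hi).le)
    hab hn).symm

lemma prod_range_prod_add_eq_div_prod_GammaSeq (ha : ∀ i ∈ s, 0 < a i) {N : ℕ} (hN : N ≠ 0) :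
    ∏ n ∈ range (N + 1), ∏ i ∈ s, ((n : ℝ) + a i) =
      (N : ℝ) ^ (∑ i ∈ s, a i) * (N ! : ℝ) ^ #s / ∏ i ∈ s, GammaSeq (a i) N := by
  rw [Finset.prod_comm, rpow_sum_of_pos (by positivity), ← prod_const, ← prod_mul_distrib,
    ← prod_div_distrib]
  refine prod_congr rfl fun i hi => ?_
  have hpos : 0 < ∏ j ∈ range (N + 1), (a i + j) :=
    prod_pos fun j _ => by have := ha i hi; positivity
  simp only [GammaSeq, add_comm _ (a i)]
  field_simp

lemma prod_range_prod_add_div_prod_add (ha : ∀ i ∈ s, 0 < a i) (hb : ∀ i ∈ s, 0 < b i)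
    (hab : ∑ i ∈ s, a i = ∑ i ∈ s, b i) {N : ℕ} (hN : N ≠ 0) :
    ∏ n ∈ range (N + 1), (∏ i ∈ s, ((n : ℝ) + a i)) / ∏ i ∈ s, ((n : ℝ) + b i) =
      (∏ i ∈ s, GammaSeq (b i) N) / ∏ i ∈ s, GammaSeq (a i) N := by
  have hGa : 0 < ∏ i ∈ s, GammaSeq (a i) N := prod_pos fun i hi => GammaSeq_pos (ha i hi) hN
  have hGb : 0 < ∏ i ∈ s, GammaSeq (b i) N := prod_pos fun i hi => GammaSeq_pos (hb i hi) hN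
  have hN' : (0 : ℝ) < N := by positivity
  rw [prod_div_distrib, prod_range_prod_add_eq_div_prod_GammaSeq s ha hN,
    prod_range_prod_add_eq_div_prod_GammaSeq s hb hN, hab]
  field_simp

theorem hasProd_prod_add_div_prod_add (ha : ∀ i ∈ s, 0 < a i) (hb : ∀ i ∈ s, 0 < b i)
    (hab : ∑ i ∈ s, a i = ∑ i ∈ s, b i) :
    HasProd (fun n : ℕ => (∏ i ∈ s, (n + a i)) / ∏ i ∈ s, (n + b i))
      ((∏ i ∈ s, Gamma (b i)) / ∏ i ∈ s, Gamma (a i)) := by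
  rw [(multipliable_prod_add_div_prod_add s ha hb hab).hasProd_iff_tendsto_nat,
    ← tendsto_add_atTop_iff_nat 1]
  have hlim := (tendsto_finsetProd s fun i _ => GammaSeq_tendsto_Gamma (b i)).div
    (tendsto_finsetProd s fun i _ => GammaSeq_tendsto_Gamma (a i))
    (prod_ne_zero_iff.mpr fun i hi => (Gamma_pos_of_pos (ha i hi)).ne')
  refine hlim.congr' ?_
  filter_upwards [eventually_ne_atTop 0] with N hN
  exact (prod_range_prod_add_div_prod_add s ha hb hab hN).symm

end RatioOfShiftedProducts

lemma convexOn_log_Gamma_mul_add {c d : ℝ} (hc : 0 < c) (hd : 0 ≤ d) :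
    ConvexOn ℝ (Ioi 0) fun s => log (Gamma (c * s + d)) := by
  refine ⟨convex_Ioi 0, fun x (hx : 0 < x) y (hy : 0 < y) p q hp hq hpq => ?_⟩
  have h := convexOn_log_Gamma.2 (mem_Ioi.mpr (by positivity : 0 < c * x + d))
    (mem_Ioi.mpr (by positivity : 0 < c * y + d)) hp hq hpq
  have harg : c * (p • x + q • y) + d = p • (c * x + d) + q • (c * y + d) := by
    simp only [smul_eq_mul]; linear_combination d * hpq.symm
  simpa only [Function.comp_apply, harg] using h

noncomputable def triplingGamma (s : ℝ) : ℝ :=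
  Gamma (s / 3) * Gamma (s / 3 + 1 / 3) * Gamma (s / 3 + 2 / 3) * 3 ^ (s - 1 / 2) / (2 * π)

lemma triplingGamma_add_one {s : ℝ} (hs : s ≠ 0) :
    triplingGamma (s + 1) = s * triplingGamma s := by
  have h0 : (s + 1) / 3 = s / 3 + 1 / 3 := by ring
  have h1 : (s + 1) / 3 + 1 / 3 = s / 3 + 2 / 3 := by ring
  have h2 : (s + 1) / 3 + 2 / 3 = s / 3 + 1 := by ring
  rw [triplingGamma, triplingGamma, h1, h2, h0, Gamma_add_one (by positivity), add_sub_right_comm,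
    rpow_add_one (by norm_num)]
  ring

lemma triplingGamma_one : triplingGamma 1 = 1 := by
  have hrefl := Gamma_mul_Gamma_one_sub (1 / 3)
  rw [show π * (1 / 3) = π / 3 by ring, sin_pi_div_three] at hrefl
  norm_num [triplingGamma] at hrefl ⊢
  rw [← sqrt_eq_rpow, hrefl]
  field_simp

lemma triplingGamma_pos {s : ℝ} (hs : 0 < s) : 0 < triplingGamma s := by
  have h1 := Gamma_pos_of_pos (by positivity : 0 < s / 3)
  have h2 := Gamma_pos_of_pos (by positivity : 0 < s / 3 + 1 / 3)
  have h3 := Gamma_pos_of_pos (by positivity : 0 < s / 3 + 2 / 3)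
  unfold triplingGamma
  positivity

lemma convexOn_log_triplingGamma : ConvexOn ℝ (Ioi 0) (log ∘ triplingGamma) := by
  refine ((((convexOn_log_Gamma_mul_add (c := 1 / 3) (d := 0) (by norm_num) le_rfl).add
    (convexOn_log_Gamma_mul_add (c := 1 / 3) (d := 1 / 3) (by norm_num) (by norm_num))).add
    (convexOn_log_Gamma_mul_add (c := 1 / 3) (d := 2 / 3) (by norm_num) (by norm_num))).add
    ((convexOn_id (convex_Ioi 0)).smul (log_nonneg (by norm_num : (1 : ℝ) ≤ 3)))).add_const
    (-log (2 * π * √3)) |>.congr fun s (hs : 0 < s) => ?_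
  have h1 := Gamma_pos_of_pos (by positivity : 0 < s / 3)
  have h2 := Gamma_pos_of_pos (by positivity : 0 < s / 3 + 1 / 3)
  have h3 := Gamma_pos_of_pos (by positivity : 0 < s / 3 + 2 / 3)
  simp only [Function.comp_apply, Pi.add_apply, smul_eq_mul, id, triplingGamma]
  rw [log_div (by positivity) (by positivity), log_mul (by positivity) (by positivity),
    log_mul (by positivity) (by positivity), log_mul (by positivity) (by positivity),
    log_rpow (by norm_num), log_mul (by positivity) (by positivity), log_sqrt (by norm_num),
    log_mul (by positivity) (by positivity)]
  ring_nf

theorem Gamma_mul_Gamma_add_third_mul_Gamma_add_two_thirds {s : ℝ} (hs : 0 < s) :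
    Gamma s * Gamma (s + 1 / 3) * Gamma (s + 2 / 3) =
      Gamma (3 * s) * 3 ^ (1 / 2 - 3 * s) * (2 * π) := by
  have h := eq_Gamma_of_log_convex convexOn_log_triplingGamma
    (fun hy => triplingGamma_add_one hy.ne') triplingGamma_pos triplingGamma_one
    (mem_Ioi.mpr (by positivity : 0 < 3 * s))
  rw [← h, triplingGamma, mul_div_cancel_left₀ s three_ne_zero,
    show 1 / 2 - 3 * s = -(3 * s - 1 / 2) by ring, rpow_neg zero_le_three]
  have : (0 : ℝ) < 3 ^ (3 * s - 1 / 2) := by positivity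
  field_simp

lemma Gamma_eighteenths_div_Gamma_ninths :
    Gamma (5 / 18) * Gamma (11 / 18) * Gamma (17 / 18) * Gamma (1 / 2) /
      (Gamma (2 / 9) * Gamma (5 / 9) * Gamma (8 / 9) * Gamma (2 / 3)) =
      (3 / 4 : ℝ) ^ (1 / 3 : ℝ) := by
  have e1 := Gamma_mul_Gamma_add_third_mul_Gamma_add_two_thirds (s := 2 / 9) (by norm_num)
  have e2 := Gamma_mul_Gamma_add_third_mul_Gamma_add_two_thirds (s := 5 / 18) (by norm_num)
  have hdup := Gamma_mul_Gamma_add_half (1 / 3)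
  have hrefl := Gamma_mul_Gamma_one_sub (1 / 3)
  rw [show π * (1 / 3) = π / 3 by ring, sin_pi_div_three] at hrefl
  norm_num at e1 e2 hdup hrefl
  have hrefl' : Gamma (1 / 3) * Gamma (2 / 3) * √3 = 2 * π := by
    rw [hrefl]; field_simp
  have hg5 : Gamma (5 / 6) * (2 * π) = Gamma (2 / 3) ^ 2 * 2 ^ (1 / 3 : ℝ) * √π * √3 := by
    linear_combination Gamma (2 / 3) * √3 * hdup - Gamma (5 / 6) * hrefl'
  have h3 : (3 : ℝ) ^ (-(1 / 3) : ℝ) * √3 = 3 ^ (1 / 3 : ℝ) * 3 ^ (-(1 / 6) : ℝ) := by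
    rw [sqrt_eq_rpow, ← rpow_add three_pos, ← rpow_add three_pos]
    norm_num
  have h4 : (3 / 4 : ℝ) ^ (1 / 3 : ℝ) * 2 = 3 ^ (1 / 3 : ℝ) * 2 ^ (1 / 3 : ℝ) := by
    have h8 : (8 : ℝ) ^ (1 / 3 : ℝ) = 2 := by
      rw [show (8 : ℝ) = 2 ^ 3 by norm_num, one_div]
      exact_mod_cast pow_rpow_inv_natCast zero_le_two three_ne_zero
    rw [← h8, ← mul_rpow (by norm_num) (by norm_num), ← mul_rpow (by norm_num) (by norm_num)]
    norm_num
  have hg2 := Gamma_pos_of_pos (by norm_num : (0 : ℝ) < 2 / 3)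
  rw [e1, e2, Gamma_one_half_eq, eq_div_iff (by positivity) |>.mpr hg5,
    eq_div_iff (by positivity) |>.mpr h3, eq_div_iff (by positivity) |>.mpr h4]
  field_simp
  exact sq_sqrt pi_pos.le

end Real

theorem stmt19 :
    (3 / 4 : ℝ) ^ ((1 : ℝ) / 3)
    = ∏' n : ℕ, ((n + 2 / 9) * (n + 5 / 9) * (n + 8 / 9) * (n + 2 / 3)
      / ((n + 5 / 18) * (n + 11 / 18) * (n + 17 / 18) * (n + 1 / 2)) : ℝ) := by
  have h := hasProd_prod_add_div_prod_add univ (a := ![2 / 9, 5 / 9, 8 / 9, 2 / 3])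
    (b := ![5 / 18, 11 / 18, 17 / 18, 1 / 2]) (by simp [Fin.forall_fin_succ])
    (by simp [Fin.forall_fin_succ]) (by simp [Fin.sum_univ_four]; norm_num)
  simp only [Fin.prod_univ_four, Matrix.cons_val] at h
  rw [h.tprod_eq, Gamma_eighteenths_div_Gamma_ninths]
end
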